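/- Let n > 1 be an odd integer and r ≥ 1. Then both the sum over k from 0 to (n^r-1)/2 and the sum over k from 0 to n^r - 1 of [4k+1]_q (q;q^2)_k^4 / (q^2;q^2)_k^4 are congruent to 0 modulo [n^r]_q. -/

import Mathlib

/-!
For each divisor `d = 2m + 1 > 1` of `n ^ r` we show that the sum vanishes at a primitive `d`-th
root of unity `ζ`; as the cyclotomic polynomials `Φ_d` are pairwise coprime with product
`[n ^ r]_q`, this gives the congruence. For `k = a d + s` with `s < d`, the factors `1 - q ^ d`
occur `a` times in both `(q; q²)_{ad}` and `(q²; q²)_{ad}`, so the `k`-th term is regular at `ζ`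
with value `C_a t(s)`, where `t(s)` is the `s`-th term evaluated at `ζ`. Here `t(s) = 0` for
`m < s < d`, since `(ζ; ζ²)_s` contains the factor `1 - ζ ^ d`, and `t(m - s) = -t(s)` for
`s ≤ m` by reflecting the `q`-shifted factorials at `ζ`. Hence the terms of every block, and of the
half block `s ≤ m`, sum to zero at `ζ`.
-/

open Finset

/-- Congruence of rational functions in `q` modulo a polynomial `M` ∈ ℚ[q]:
after clearing a denominator `g` having no non-unit common factor with `M`,
the difference is divisible by `M`. -/
def qcongQ (x y : RatFunc ℚ) (M : Polynomial ℚ) : Prop :=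
  ∃ f g : Polynomial ℚ, IsRelPrime g M ∧
    (x - y) * algebraMap (Polynomial ℚ) (RatFunc ℚ) g =
      algebraMap (Polynomial ℚ) (RatFunc ℚ) (M * f)

open Polynomial

section Evaluation

variable {K L : Type*} [Field K] [Field L] [Algebra K L] {ζ : L} {x y : RatFunc K} {v u : L}

def HasValueAt (ζ : L) (x : RatFunc K) (v : L) : Prop :=
  ∃ p w : K[X], aeval ζ w ≠ 0 ∧ x * algebraMap K[X] (RatFunc K) w = algebraMap K[X] (RatFunc K) p ∧
    aeval ζ p = v * aeval ζ w

theorem hasValueAt_algebraMap (ζ : L) (p : K[X]) :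
    HasValueAt ζ (algebraMap K[X] (RatFunc K) p) (aeval ζ p) :=
  ⟨p, 1, by simp, by simp, by simp⟩

theorem HasValueAt.add (hx : HasValueAt ζ x v) (hy : HasValueAt ζ y u) :
    HasValueAt ζ (x + y) (v + u) := by
  obtain ⟨p, w, hw, hxw, hp⟩ := hx
  obtain ⟨p', w', hw', hyw, hp'⟩ := hy
  refine ⟨p * w' + p' * w, w * w', by simp [hw, hw'], ?_,
    by simp only [map_add, map_mul, hp, hp']; ring⟩
  simp only [map_add, map_mul, ← hxw, ← hyw]
  ring

theorem HasValueAt.mul (hx : HasValueAt ζ x v) (hy : HasValueAt ζ y u) :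
    HasValueAt ζ (x * y) (v * u) := by
  obtain ⟨p, w, hw, hxw, hp⟩ := hx
  obtain ⟨p', w', hw', hyw, hp'⟩ := hy
  refine ⟨p * p', w * w', by simp [hw, hw'], ?_, by simp only [map_mul, hp, hp']; ring⟩
  simp only [map_mul, ← hxw, ← hyw]
  ring

theorem HasValueAt.inv (hx : HasValueAt ζ x v) (hv : v ≠ 0) : HasValueAt ζ x⁻¹ v⁻¹ := by
  obtain ⟨p, w, hw, hxw, hp⟩ := hx
  have hpζ : aeval ζ p ≠ 0 := by rw [hp]; exact mul_ne_zero hv hw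
  have hx0 : x ≠ 0 := by
    rintro rfl
    rw [zero_mul, eq_comm, map_eq_zero_iff _ (RatFunc.algebraMap_injective K)] at hxw
    simp [hxw] at hpζ
  refine ⟨w, p, hpζ, ?_, by rw [hp]; field_simp⟩
  rw [← hxw, inv_mul_cancel_left₀ hx0]

theorem HasValueAt.div (hx : HasValueAt ζ x v) (hy : HasValueAt ζ y u) (hu : u ≠ 0) :
    HasValueAt ζ (x / y) (v / u) := by
  simpa only [div_eq_mul_inv] using hx.mul (hy.inv hu)

theorem HasValueAt.pow (hx : HasValueAt ζ x v) (n : ℕ) : HasValueAt ζ (x ^ n) (v ^ n) := by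
  induction n with
  | zero => simpa using hasValueAt_algebraMap (K := K) ζ 1
  | succ n ih => simpa only [pow_succ] using ih.mul hx

theorem hasValueAt_sum {ι : Type*} {s : Finset ι} {f : ι → RatFunc K} {g : ι → L}
    (h : ∀ i ∈ s, HasValueAt ζ (f i) (g i)) : HasValueAt ζ (∑ i ∈ s, f i) (∑ i ∈ s, g i) := by
  classical
  induction s using Finset.induction_on with
  | empty => simpa using hasValueAt_algebraMap (K := K) ζ 0
  | insert i s hi ih =>
    rw [sum_insert hi, sum_insert hi]
    exact (h i (mem_insert_self i s)).add (ih fun j hj => h j (mem_insert_of_mem hj))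

theorem HasValueAt.minpoly_dvd_num (hx : HasValueAt ζ x 0) (hζ : IsIntegral K ζ) :
    minpoly K ζ ∣ x.num := by
  obtain ⟨p, w, hw, hxw, hp⟩ := hx
  rw [zero_mul] at hp
  have hw0 : w ≠ 0 := by rintro rfl; simp at hw
  have hnum : x.num * w = p * x.denom := by
    rw [RatFunc.num_mul_eq_mul_denom_iff hw0, eq_div_iff (RatFunc.algebraMap_ne_zero hw0), hxw]
  have hdvd : minpoly K ζ ∣ x.num * w := hnum ▸ (minpoly.dvd K ζ hp).mul_right _
  refine ((minpoly.irreducible hζ).prime.dvd_or_dvd hdvd).resolve_right fun h => hw ?_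
  obtain ⟨c, rfl⟩ := h
  rw [map_mul, minpoly.aeval, zero_mul]

end Evaluation

theorem qcongQ_zero_of_cyclotomic_dvd_num {N : ℕ} (hN : 0 < N) {x : RatFunc ℚ}
    (h : ∀ d, d ∣ N → 1 < d → cyclotomic d ℚ ∣ x.num) :
    qcongQ x 0 (∑ i ∈ range N, X ^ i) := by
  rw [← prod_cyclotomic_eq_geom_sum hN ℚ]
  have hM : ∏ d ∈ N.divisors.erase 1, cyclotomic d ℚ ∣ x.num := by
    refine prod_dvd_of_coprime (fun d _ e _ hde => cyclotomic.isCoprime_rat hde) fun d hd => ?_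
    obtain ⟨hd1, hdN, -⟩ := by simpa using hd
    exact h d hdN (by have := Nat.pos_of_dvd_of_pos hdN hN; omega)
  obtain ⟨f, hf⟩ := hM
  refine ⟨f, x.denom, (x.isCoprime_num_denom.of_isCoprime_of_dvd_left ⟨f, hf⟩).symm.isRelPrime, ?_⟩
  rw [sub_zero, ← hf]
  nth_rewrite 1 [← RatFunc.num_div_denom x]
  exact div_mul_cancel₀ _ (RatFunc.algebraMap_ne_zero x.denom_ne_zero)

section QAnalogues

variable {R S F : Type*}

def qInt [Semiring R] (q : R) (n : ℕ) : R := ∑ i ∈ range n, q ^ i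

/-- `qPoch2 q c n` is the q-shifted factorial `(q^c; q^2)_n`. -/
def qPoch2 [CommRing R] (q : R) (c n : ℕ) : R := ∏ i ∈ range n, (1 - q ^ (2 * i + c))

def qTerm [Field R] (q : R) (k : ℕ) : R := qInt q (4 * k + 1) * qPoch2 q 1 k ^ 4 / qPoch2 q 2 k ^ 4

theorem map_qInt [Semiring R] [Semiring S] [FunLike F R S] [RingHomClass F R S] (f : F) (q : R)
    (n : ℕ) : f (qInt q n) = qInt (f q) n := by
  simp [qInt]

theorem map_qPoch2 [CommRing R] [CommRing S] [FunLike F R S] [RingHomClass F R S] (f : F) (q : R)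
    (c n : ℕ) : f (qPoch2 q c n) = qPoch2 (f q) c n := by
  simp [qPoch2]

theorem qPoch2_succ [CommRing R] (q : R) (c n : ℕ) :
    qPoch2 q c (n + 1) = qPoch2 q c n * (1 - q ^ (2 * n + c)) :=
  prod_range_succ _ _

theorem qPoch2_add [CommRing R] (q : R) (c k s : ℕ) :
    qPoch2 q c (k + s) = qPoch2 q c k * qPoch2 q (2 * k + c) s := by
  rw [qPoch2, qPoch2, qPoch2, prod_range_add]
  exact congrArg _ (prod_congr rfl fun i _ => by ring_nf)

end QAnalogues

section RootOfUnity

variable {L : Type*} [Field L] {ζ : L} {d m : ℕ}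

theorem qInt_add_mul (hζ : ζ ≠ 1) (hζd : ζ ^ d = 1) (n k : ℕ) :
    qInt ζ (n + d * k) = qInt ζ n := by
  simp only [qInt, geom_sum_eq hζ, pow_add, pow_mul, hζd, one_pow, mul_one]

theorem qInt_mul_pow (hζ : ζ ≠ 1) {i j : ℕ} (h : ζ ^ (i + j) = 1) :
    qInt ζ i * ζ ^ j = -qInt ζ j := by
  have hζ' : ζ - 1 ≠ 0 := sub_ne_zero.mpr hζ
  rw [pow_add] at h
  rw [qInt, qInt, geom_sum_eq hζ, geom_sum_eq hζ]
  field_simp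
  linear_combination h

theorem qPoch2_add_mul (hζd : ζ ^ d = 1) (c k s : ℕ) :
    qPoch2 ζ (c + d * k) s = qPoch2 ζ c s := by
  simp only [qPoch2, ← add_assoc, pow_add _ (2 * _ + c), pow_mul, hζd, one_pow, mul_one]

theorem qPoch2_ne_zero (hζ : IsPrimitiveRoot ζ d) {c s : ℕ} (h : ∀ i < s, ¬ d ∣ 2 * i + c) :
    qPoch2 ζ c s ≠ 0 := by
  refine prod_ne_zero_iff.mpr fun i hi => sub_ne_zero.mpr fun h1 => h i (mem_range.mp hi) ?_
  exact (hζ.pow_eq_one_iff_dvd _).mp h1.symm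

theorem qPoch2_eq_zero {c i s : ℕ} (h : ζ ^ (2 * i + c) = 1) (hi : i < s) : qPoch2 ζ c s = 0 :=
  prod_eq_zero (mem_range.mpr hi) (by rw [h, sub_self])

theorem qPoch2_mul_prod_neg_pow (h : ζ ^ (2 * m + 1) = 1) {a b : ℕ} (hab : a + b = 3) :
    ∀ s t, t + s = m →
      qPoch2 ζ a m * ∏ j ∈ range s, -ζ ^ (2 * j + b) = qPoch2 ζ a t * qPoch2 ζ b s := by
  intro s
  induction s with
  | zero => rintro t rfl; simp [qPoch2]
  | succ s ih =>
    intro t hts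
    have hexp : ζ ^ (2 * t + a) * ζ ^ (2 * s + b) = 1 := by
      rw [← pow_add, show 2 * t + a + (2 * s + b) = 2 * m + 1 by omega, h]
    rw [prod_range_succ, ← mul_assoc, ih (t + 1) (by omega), qPoch2_succ, qPoch2_succ]
    linear_combination qPoch2 ζ a t * qPoch2 ζ b s * hexp

theorem prod_neg_pow_two_mul_add_two (ζ : L) (s : ℕ) :
    ∏ j ∈ range s, -ζ ^ (2 * j + 2) = ζ ^ s * ∏ j ∈ range s, -ζ ^ (2 * j + 1) := by
  induction s with
  | zero => simp
  | succ s ih => rw [prod_range_succ, prod_range_succ, ih]; ring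

theorem prod_neg_pow_two_mul_add_one_pow_four (ζ : L) (m : ℕ) :
    (∏ j ∈ range m, -ζ ^ (2 * j + 1)) ^ 4 = ζ ^ (4 * (m * m)) := by
  induction m with
  | zero => simp
  | succ m ih => rw [prod_range_succ, mul_pow, ih]; ring

theorem qPoch2_one_pow_four (h : ζ ^ (2 * m + 1) = 1) :
    qPoch2 ζ 1 m ^ 4 = ζ * qPoch2 ζ 2 m ^ 4 := by
  have hrefl := qPoch2_mul_prod_neg_pow h (a := 2) (b := 1) rfl m 0 (zero_add m)
  have hpow : ζ ^ (4 * (m * m)) = ζ :=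
    calc ζ ^ (4 * (m * m)) = ζ ^ (4 * (m * m)) * ζ ^ (2 * m + 1) := by rw [h, mul_one]
      _ = (ζ ^ (2 * m + 1)) ^ (2 * m) * ζ := by ring
      _ = ζ := by rw [h, one_pow, one_mul]
  rw [show qPoch2 ζ 2 0 = 1 from prod_range_zero _, one_mul] at hrefl
  rw [← hrefl, mul_pow, prod_neg_pow_two_mul_add_one_pow_four, hpow, mul_comm]

theorem qPoch2_pow_four_reflect (hζ : IsPrimitiveRoot ζ (2 * m + 1)) {s : ℕ} (hs : s ≤ m) :
    qPoch2 ζ 1 (m - s) ^ 4 * qPoch2 ζ 2 s ^ 4 =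
      ζ ^ (4 * s + 1) * (qPoch2 ζ 2 (m - s) ^ 4 * qPoch2 ζ 1 s ^ 4) := by
  have h := hζ.pow_eq_one
  have hζ0 : ζ ≠ 0 := hζ.ne_zero (by omega)
  set E := ∏ j ∈ range s, -ζ ^ (2 * j + 1)
  have hE : E ≠ 0 := prod_ne_zero_iff.mpr fun _ _ => neg_ne_zero.mpr (pow_ne_zero _ hζ0)
  have hQm : qPoch2 ζ 2 m ≠ 0 :=
    qPoch2_ne_zero hζ fun i hi => Nat.not_dvd_of_pos_of_lt (by omega) (by omega)
  have h1 := qPoch2_mul_prod_neg_pow h (a := 1) (b := 2) rfl s (m - s) (by omega)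
  have h2 := qPoch2_mul_prod_neg_pow h (a := 2) (b := 1) rfl s (m - s) (by omega)
  rw [prod_neg_pow_two_mul_add_two] at h1
  refine mul_left_cancel₀ (pow_ne_zero 4 (mul_ne_zero hQm hE)) ?_
  calc (qPoch2 ζ 2 m * E) ^ 4 * (qPoch2 ζ 1 (m - s) ^ 4 * qPoch2 ζ 2 s ^ 4)
      = (qPoch2 ζ 2 m * E) ^ 4 * (qPoch2 ζ 1 (m - s) * qPoch2 ζ 2 s) ^ 4 := by ring
    _ = qPoch2 ζ 1 m ^ 4 * ζ ^ (4 * s) * E ^ 4 * (qPoch2 ζ 2 m * E) ^ 4 := by rw [← h1]; ring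
    _ = ζ ^ (4 * s + 1) * (qPoch2 ζ 2 m * E) ^ 4 * (qPoch2 ζ 2 m * E) ^ 4 := by
        rw [qPoch2_one_pow_four h]; ring
    _ = _ := by rw [h2]; ring

theorem qTerm_reflect (hζ : IsPrimitiveRoot ζ (2 * m + 1)) (hm : 0 < m) {s : ℕ} (hs : s ≤ m) :
    qTerm ζ (m - s) = -qTerm ζ s := by
  have hζ1 : ζ ≠ 1 := hζ.ne_one (by omega)
  have hnd : ∀ {c t}, 0 < c → c ≤ 2 → t ≤ m → ∀ i < t, ¬ 2 * m + 1 ∣ 2 * i + c :=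
    fun _ _ _ i hi => Nat.not_dvd_of_pos_of_lt (by omega) (by omega)
  have hB := qInt_mul_pow hζ1 (i := 4 * (m - s) + 1) (j := 4 * s + 1)
    (by rw [show 4 * (m - s) + 1 + (4 * s + 1) = (2 * m + 1) * 2 by omega, pow_mul, hζ.pow_eq_one,
      one_pow])
  have hQs := qPoch2_ne_zero hζ (hnd (c := 2) two_pos le_rfl hs)
  have hQt := qPoch2_ne_zero hζ (hnd (c := 2) two_pos le_rfl (Nat.sub_le m s))
  have hPs := qPoch2_ne_zero hζ (hnd (c := 1) one_pos one_le_two hs)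
  rw [qTerm, qTerm, ← neg_div, div_eq_div_iff (pow_ne_zero 4 hQt) (pow_ne_zero 4 hQs)]
  refine mul_left_cancel₀ (pow_ne_zero 4 hPs) ?_
  linear_combination (qPoch2 ζ 1 s ^ 4 * qInt ζ (4 * (m - s) + 1)) * qPoch2_pow_four_reflect hζ hs
    + qPoch2 ζ 2 (m - s) ^ 4 * qPoch2 ζ 1 s ^ 8 * hB

theorem sum_qTerm_eq_zero [CharZero L] (hζ : IsPrimitiveRoot ζ (2 * m + 1)) (hm : 0 < m) {n : ℕ}
    (hn : m < n) : ∑ k ∈ range n, qTerm ζ k = 0 := by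
  have hhalf : ∑ k ∈ range (m + 1), qTerm ζ k = 0 := by
    rw [← self_eq_neg, ← sum_neg_distrib, ← sum_range_reflect]
    exact sum_congr rfl fun k hk => by
      rw [add_tsub_cancel_right, qTerm_reflect hζ hm (by simpa [Nat.lt_succ_iff] using hk)]
  rw [← sum_range_add_sum_Ico _ hn, hhalf, zero_add]
  refine sum_eq_zero fun k hk => ?_
  rw [qTerm, qPoch2_eq_zero hζ.pow_eq_one (mem_Ico.mp hk).1]
  simp

end RootOfUnity

theorem sum_range_mul_ite_dvd {d c j₀ : ℕ} (hd : Odd d) (hj₀ : j₀ < d) (h : d ∣ 2 * j₀ + c)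
    (a : ℕ) : ∑ i ∈ range (a * d), (if d ∣ 2 * i + c then 1 else 0) = a := by
  have key : ∀ i, d ∣ 2 * i + c ↔ i % d = j₀ := by
    intro i
    rw [← Nat.mod_eq_of_lt hj₀, ← Nat.ModEq, ← Nat.modEq_zero_iff_dvd]
    have h0 := (Nat.modEq_zero_iff_dvd.mpr h).symm
    refine ⟨fun hi => ?_, fun hi => ((hi.mul_left 2).add_right c).trans h0.symm⟩
    exact Nat.ModEq.cancel_left_of_coprime hd.coprime_two_right.gcd_eq_one
      (Nat.ModEq.add_right_cancel' c (hi.trans h0))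
  induction a with
  | zero => simp
  | succ a ih =>
    rw [add_mul, one_mul, sum_range_add, ih]
    simp_rw [key, Nat.mul_add_mod_self_right]
    rw [sum_congr rfl fun x hx => by rw [Nat.mod_eq_of_lt (mem_range.mp hx)], sum_ite_eq',
      if_pos (mem_range.mpr hj₀)]

section Regularity

variable {K L : Type*} [Field K] [Field L] [Algebra K L] [CharZero L] {ζ : L} {d m : ℕ}

theorem exists_one_sub_X_pow_eq (hζ : IsPrimitiveRoot ζ d) {e : ℕ} (he : 0 < e) :
    ∃ u : K[X], 1 - X ^ e = (1 - X ^ d) ^ (if d ∣ e then 1 else 0) * u ∧ aeval ζ u ≠ 0 := by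
  split_ifs with hde
  · obtain ⟨k, rfl⟩ := hde
    refine ⟨∑ j ∈ range k, (X ^ d) ^ j, by rw [pow_one, mul_neg_geom_sum, pow_mul], ?_⟩
    simp [hζ.pow_eq_one, Nat.pos_of_mul_pos_left he |>.ne']
  · refine ⟨1 - X ^ e, (one_mul _).symm, ?_⟩
    rwa [map_sub, map_one, map_pow, aeval_X, sub_ne_zero, ne_comm, Ne, hζ.pow_eq_one_iff_dvd]

theorem exists_prod_one_sub_X_pow_eq (hζ : IsPrimitiveRoot ζ d) {f : ℕ → ℕ}
    (hf : ∀ i, 0 < f i) (n : ℕ) :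
    ∃ u : K[X], ∏ i ∈ range n, (1 - X ^ f i) =
      (1 - X ^ d) ^ (∑ i ∈ range n, if d ∣ f i then 1 else 0) * u ∧ aeval ζ u ≠ 0 := by
  induction n with
  | zero => exact ⟨1, by simp, by simp⟩
  | succ n ih =>
    obtain ⟨u, hu, hu0⟩ := ih
    obtain ⟨u', hu', hu0'⟩ := exists_one_sub_X_pow_eq (K := K) hζ (hf n)
    refine ⟨u * u', ?_, by simpa using ⟨hu0, hu0'⟩⟩
    rw [prod_range_succ, sum_range_succ, hu, hu', pow_add]
    ring

theorem exists_qPoch2_mul_eq (hζ : IsPrimitiveRoot ζ d) (hd : Odd d) {c j₀ : ℕ} (hc : 0 < c)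
    (hj₀ : j₀ < d) (h : d ∣ 2 * j₀ + c) (a : ℕ) :
    ∃ u : K[X], qPoch2 X c (a * d) = (1 - X ^ d) ^ a * u ∧ aeval ζ u ≠ 0 := by
  obtain ⟨u, hu, hu0⟩ := exists_prod_one_sub_X_pow_eq (K := K) hζ
    (f := fun i => 2 * i + c) (fun _ => by omega) (a * d)
  exact ⟨u, by rw [qPoch2, hu, sum_range_mul_ite_dvd hd hj₀ h], hu0⟩

theorem exists_hasValueAt_qTerm (hζ : IsPrimitiveRoot ζ d) (hd : d = 2 * m + 1) (hm : 0 < m)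
    (a : ℕ) :
    ∃ C : L, ∀ s < d, HasValueAt ζ (qTerm (RatFunc.X : RatFunc K) (a * d + s)) (C * qTerm ζ s) := by
  have hodd : Odd d := ⟨m, hd⟩
  obtain ⟨p, hp, hp0⟩ := exists_qPoch2_mul_eq (K := K) hζ hodd one_pos (j₀ := m) (by omega)
    (by rw [hd]) a
  obtain ⟨q, hq, hq0⟩ := exists_qPoch2_mul_eq (K := K) hζ hodd two_pos (j₀ := 2 * m) (by omega)
    ⟨2, by omega⟩ a
  refine ⟨(aeval ζ p / aeval ζ q) ^ 4, fun s hs => ?_⟩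
  have htail : ∀ c, aeval ζ (qPoch2 (X : K[X]) (2 * (a * d) + c) s) = qPoch2 ζ c s := fun c => by
    rw [map_qPoch2, aeval_X, show 2 * (a * d) + c = c + d * (2 * a) by ring,
      qPoch2_add_mul hζ.pow_eq_one]
  have hQ0 : qPoch2 ζ 2 s ≠ 0 := qPoch2_ne_zero hζ fun i hi hdvd => by
    have := Nat.le_of_dvd (by omega) <|
      hodd.coprime_two_right.dvd_of_dvd_mul_left (show d ∣ 2 * (i + 1) by rwa [mul_add_one])
    omega
  have hB : aeval ζ (qInt (X : K[X]) (4 * (a * d + s) + 1)) = qInt ζ (4 * s + 1) := by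
    rw [map_qInt, aeval_X, show 4 * (a * d + s) + 1 = 4 * s + 1 + d * (4 * a) by ring,
      qInt_add_mul (hζ.ne_one (by omega)) hζ.pow_eq_one]
  have hterm : qTerm (RatFunc.X : RatFunc K) (a * d + s) =
      algebraMap K[X] (RatFunc K) (qInt X (4 * (a * d + s) + 1)) *
        (algebraMap K[X] (RatFunc K) p / algebraMap K[X] (RatFunc K) q *
          (algebraMap K[X] (RatFunc K) (qPoch2 X (2 * (a * d) + 1) s) /
            algebraMap K[X] (RatFunc K) (qPoch2 X (2 * (a * d) + 2) s))) ^ 4 := by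
    have hne : ∀ {f : K[X]}, aeval ζ f ≠ 0 → algebraMap K[X] (RatFunc K) f ≠ 0 :=
      fun hf => RatFunc.algebraMap_ne_zero fun h => hf (by rw [h, map_zero])
    have hX : algebraMap K[X] (RatFunc K) (1 - X ^ d) ≠ 0 := RatFunc.algebraMap_ne_zero fun h => by
      simpa [hd] using congrArg (eval 0) h
    have hQ : algebraMap K[X] (RatFunc K) (qPoch2 X (2 * (a * d) + 2) s) ≠ 0 :=
      hne (by rwa [htail])
    rw [qTerm, ← RatFunc.algebraMap_X, ← map_qInt, ← map_qPoch2, ← map_qPoch2, qPoch2_add,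
      qPoch2_add, hp, hq]
    simp only [map_mul, map_pow]
    field_simp [hne hq0]
  rw [hterm]
  convert (hasValueAt_algebraMap ζ _).mul ((((hasValueAt_algebraMap ζ p).div
    (hasValueAt_algebraMap ζ q) hq0).mul ((hasValueAt_algebraMap ζ _).div
    (hasValueAt_algebraMap ζ _) (by rwa [htail]))).pow 4) using 1
  rw [hB, htail, htail, qTerm]
  ring

variable (hζ : IsPrimitiveRoot ζ d) (hd : d = 2 * m + 1) (hm : 0 < m)
include hζ hd hm

theorem hasValueAt_sum_qTerm_block (a : ℕ) {n : ℕ} (hn : m < n) (hnd : n ≤ d) :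
    HasValueAt ζ (∑ s ∈ range n, qTerm (RatFunc.X : RatFunc K) (a * d + s)) 0 := by
  obtain ⟨C, hC⟩ := exists_hasValueAt_qTerm (K := K) hζ hd hm a
  have h := hasValueAt_sum (s := range n) fun s hs => hC s (by rw [mem_range] at hs; omega)
  rwa [← mul_sum, sum_qTerm_eq_zero (hd ▸ hζ) hm hn, mul_zero] at h

theorem hasValueAt_sum_qTerm (a : ℕ) {n : ℕ} (hn : m < n) (hnd : n ≤ d) :
    HasValueAt ζ (∑ k ∈ range (a * d + n), qTerm (RatFunc.X : RatFunc K) k) 0 := by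
  induction a generalizing n with
  | zero => simpa using hasValueAt_sum_qTerm_block (K := K) hζ hd hm 0 hn hnd
  | succ a ih =>
    have hblock := hasValueAt_sum_qTerm_block (K := K) hζ hd hm (a + 1) hn hnd
    rw [add_mul, one_mul] at hblock
    rw [add_mul, one_mul, sum_range_add]
    simpa using (ih (by omega) le_rfl).add hblock

end Regularity

theorem cyclotomic_dvd_num_sum_qTerm {d m : ℕ} (hd : d = 2 * m + 1) (hm : 0 < m) (a : ℕ) {n : ℕ}
    (hn : m < n) (hnd : n ≤ d) :
    cyclotomic d ℚ ∣ (∑ k ∈ range (a * d + n), qTerm (RatFunc.X : RatFunc ℚ) k).num := by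
  have hζ := Complex.isPrimitiveRoot_exp d (by omega)
  rw [cyclotomic_eq_minpoly_rat hζ (by omega)]
  exact (hasValueAt_sum_qTerm hζ hd hm a hn hnd).minpoly_dvd_num
    (hζ.isIntegral (by omega)).tower_top

theorem cyclotomic_dvd_num_sum_qTerm_of_dvd {N d : ℕ} (hN : Odd N) (hdN : d ∣ N) (hd : 1 < d) :
    cyclotomic d ℚ ∣ (∑ k ∈ range ((N - 1) / 2 + 1), qTerm (RatFunc.X : RatFunc ℚ) k).num ∧
      cyclotomic d ℚ ∣ (∑ k ∈ range N, qTerm (RatFunc.X : RatFunc ℚ) k).num := by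
  obtain ⟨m, rfl⟩ := hN.of_dvd_nat hdN
  obtain ⟨e, he⟩ := hN.of_dvd_nat (Nat.div_dvd_of_dvd hdN)
  have hNe : N = e * (2 * m + 1) * 2 + 2 * m + 1 := by
    rw [← Nat.div_mul_cancel hdN, he]; ring
  constructor
  · rw [show (N - 1) / 2 + 1 = e * (2 * m + 1) + (m + 1) by omega]
    exact cyclotomic_dvd_num_sum_qTerm rfl (by omega) e (by omega) (by omega)
  · rw [show N = 2 * e * (2 * m + 1) + (2 * m + 1) by rw [hNe]; ring]
    exact cyclotomic_dvd_num_sum_qTerm rfl (by omega) (2 * e) (by omega) le_rfl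

theorem stmt_17_general (n r : ℕ) (hodd : Odd n) :
    qcongQ
      (∑ k ∈ Finset.range ((n ^ r - 1) / 2 + 1),
        (∑ i ∈ Finset.range (4 * k + 1), (RatFunc.X : RatFunc ℚ) ^ i) *
          (∏ j ∈ Finset.range k, (1 - (RatFunc.X : RatFunc ℚ) ^ (2 * j + 1))) ^ 4 /
          (∏ j ∈ Finset.range k, (1 - (RatFunc.X : RatFunc ℚ) ^ (2 * j + 2))) ^ 4)
      0
      (∑ i ∈ Finset.range (n ^ r), Polynomial.X ^ i) ∧
    qcongQ
      (∑ k ∈ Finset.range (n ^ r),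
        (∑ i ∈ Finset.range (4 * k + 1), (RatFunc.X : RatFunc ℚ) ^ i) *
          (∏ j ∈ Finset.range k, (1 - (RatFunc.X : RatFunc ℚ) ^ (2 * j + 1))) ^ 4 /
          (∏ j ∈ Finset.range k, (1 - (RatFunc.X : RatFunc ℚ) ^ (2 * j + 2))) ^ 4)
      0
      (∑ i ∈ Finset.range (n ^ r), Polynomial.X ^ i) := by
  have hN : Odd (n ^ r) := hodd.pow
  exact ⟨qcongQ_zero_of_cyclotomic_dvd_num hN.pos fun d hdN hd =>
      (cyclotomic_dvd_num_sum_qTerm_of_dvd hN hdN hd).1,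
    qcongQ_zero_of_cyclotomic_dvd_num hN.pos fun d hdN hd =>
      (cyclotomic_dvd_num_sum_qTerm_of_dvd hN hdN hd).2⟩

/-- both truncations of the (C.3)-type sum are ≡ 0 (mod [n^r]_q). -/
theorem stmt_17 (n r : ℕ) (hn : 1 < n) (hodd : Odd n) (hr : 1 ≤ r) :
    qcongQ
      (∑ k ∈ Finset.range ((n ^ r - 1) / 2 + 1),
        (∑ i ∈ Finset.range (4 * k + 1), (RatFunc.X : RatFunc ℚ) ^ i) *
          (∏ j ∈ Finset.range k, (1 - (RatFunc.X : RatFunc ℚ) ^ (2 * j + 1))) ^ 4 /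
          (∏ j ∈ Finset.range k, (1 - (RatFunc.X : RatFunc ℚ) ^ (2 * j + 2))) ^ 4)
      0
      (∑ i ∈ Finset.range (n ^ r), Polynomial.X ^ i) ∧
    qcongQ
      (∑ k ∈ Finset.range (n ^ r),
        (∑ i ∈ Finset.range (4 * k + 1), (RatFunc.X : RatFunc ℚ) ^ i) *
          (∏ j ∈ Finset.range k, (1 - (RatFunc.X : RatFunc ℚ) ^ (2 * j + 1))) ^ 4 /
          (∏ j ∈ Finset.range k, (1 - (RatFunc.X : RatFunc ℚ) ^ (2 * j + 2))) ^ 4)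
      0
      (∑ i ∈ Finset.range (n ^ r), Polynomial.X ^ i) :=
  stmt_17_general n r hodd
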